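/- arXiv:1612.07806 — 2 statements merged into one kernel-verified Lean document; each statement's English description precedes it below -/
import Mathlib

section
/- Let 𝕂 be ℝ or ℂ, let A be an m×d matrix over 𝕂, let x ∈ 𝕂^d, and let Ω ⊆ Fin d. Set T = supp(x) ∪ Ω. Then ‖((I − A*A)x)_Ω‖ ≤ ‖I − A_T* A_T‖ · ‖x_T‖, where A_T is the column submatrix of A with columns indexed by T, v_Ω denotes the restriction of a vector v to the coordinates in Ω, ‖·‖ is the Euclidean norm on vectors, and the matrix norm is the ℓ2→ℓ2 operator norm. -/
open Matrix
open scoped Matrix.Norms.L2Operator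

/-- Euclidean (ℓ2) norm of a finitely indexed vector. -/
noncomputable def eNorm {𝕂 : Type*} [RCLike 𝕂] {ι : Type*} [Fintype ι] (x : ι → 𝕂) : ℝ :=
  Real.sqrt (∑ i, ‖x i‖ ^ 2)

/-- The column submatrix of `A` consisting of the columns indexed by `Ω`. -/
def colSubmatrix {𝕂 : Type*} [RCLike 𝕂] {m : Type*} {d : Type*} (A : Matrix m d 𝕂)
    (Ω : Finset d) : Matrix m (↥Ω) 𝕂 :=
  A.submatrix id Subtype.val

/-- The restriction of a vector `v` to the coordinates in `Ω`. -/
def restrictVec {𝕂 : Type*} [RCLike 𝕂] {d : Type*} (v : d → 𝕂) (Ω : Finset d) : ↥Ω → 𝕂 :=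
  fun j => v j.val

/-- The support of a finitely indexed vector, as a `Finset`. -/
noncomputable def finSupp {𝕂 : Type*} [RCLike 𝕂] {d : Type*} [Fintype d] (x : d → 𝕂) :
    Finset d :=
  Finset.univ.filter (fun j => x j ≠ 0)

/-!
The coordinates of `(I - A*A) x` in `T = supp x ∪ Ω` only see the columns of `A` in `T`, so the
restriction of `(I - A*A) x` to `T` is `(I - A_T* A_T) x_T`. Restricting further to `Ω ⊆ T` can
only decrease the Euclidean norm, and the operator-norm bound finishes the proof.
-/

section

variable {𝕂 : Type*} [RCLike 𝕂]

lemma eNorm_eq_norm_toLp {ι : Type*} [Fintype ι] (v : ι → 𝕂) :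
    eNorm v = ‖WithLp.toLp 2 v‖ := by
  rw [EuclideanSpace.norm_eq]
  rfl

lemma eNorm_mulVec_le {m n : Type*} [Fintype m] [Fintype n] [DecidableEq n] (B : Matrix m n 𝕂) (v : n → 𝕂) :
    eNorm (B *ᵥ v) ≤ ‖B‖ * eNorm v := by
  rw [eNorm_eq_norm_toLp, eNorm_eq_norm_toLp]
  exact B.l2_opNorm_mulVec (WithLp.toLp 2 v)

lemma eNorm_restrictVec_le_of_subset {d : Type*} (v : d → 𝕂) {S T : Finset d} (hST : S ⊆ T) :
    eNorm (restrictVec v S) ≤ eNorm (restrictVec v T) := by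
  unfold eNorm restrictVec
  gcongr
  rw [Finset.sum_coe_sort S fun j => ‖v j‖ ^ 2, Finset.sum_coe_sort T fun j => ‖v j‖ ^ 2]
  exact Finset.sum_le_sum_of_subset_of_nonneg hST fun _ _ _ => by positivity

lemma restrictVec_mulVec_of_finSupp_subset {d : Type*} [Fintype d] (M : Matrix d d 𝕂)
    {x : d → 𝕂} {T : Finset d} (hT : finSupp x ⊆ T) :
    restrictVec (M *ᵥ x) T = M.submatrix (↑) (↑) *ᵥ restrictVec x T := by
  have hx : ∀ k ∉ T, x k = 0 := fun k hk => by
    by_contra hxk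
    exact hk (hT (by simpa [finSupp] using hxk))
  ext j
  simp only [restrictVec, mulVec, dotProduct, submatrix_apply]
  rw [Finset.sum_coe_sort T fun k => M j k * x k]
  exact (Finset.sum_subset (Finset.subset_univ T) fun k _ hk => by rw [hx k hk, mul_zero]).symm

lemma one_sub_conjTranspose_colSubmatrix_mul {m d : Type*} [Fintype m] [DecidableEq d]
    (A : Matrix m d 𝕂) (T : Finset d) :
    1 - (colSubmatrix A T)ᴴ * colSubmatrix A T = (1 - Aᴴ * A).submatrix (↑) (↑) := by
  rw [colSubmatrix, conjTranspose_submatrix, ← submatrix_mul _ _ _ id _ Function.bijective_id,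
    ← submatrix_one (α := 𝕂) _ Subtype.val_injective]
  rfl

end

theorem restricting_columns {𝕂 : Type*} [RCLike 𝕂] {m d : ℕ}
    (A : Matrix (Fin m) (Fin d) 𝕂) (x : Fin d → 𝕂) (Ω : Finset (Fin d)) :
    eNorm (restrictVec ((1 - Aᴴ * A).mulVec x) Ω) ≤
      ‖(1 : Matrix (↥(finSupp x ∪ Ω)) (↥(finSupp x ∪ Ω)) 𝕂) -
          (colSubmatrix A (finSupp x ∪ Ω))ᴴ * colSubmatrix A (finSupp x ∪ Ω)‖ *
        eNorm (restrictVec x (finSupp x ∪ Ω)) := by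
  calc eNorm (restrictVec ((1 - Aᴴ * A) *ᵥ x) Ω)
      ≤ eNorm (restrictVec ((1 - Aᴴ * A) *ᵥ x) (finSupp x ∪ Ω)) :=
        eNorm_restrictVec_le_of_subset _ Finset.subset_union_right
    _ = eNorm ((1 - (colSubmatrix A (finSupp x ∪ Ω))ᴴ * colSubmatrix A (finSupp x ∪ Ω)) *ᵥ
          restrictVec x (finSupp x ∪ Ω)) := by
        rw [one_sub_conjTranspose_colSubmatrix_mul,
          restrictVec_mulVec_of_finSupp_subset _ Finset.subset_union_left]
    _ ≤ _ := eNorm_mulVec_le _ _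
end

section
/- For all real numbers c and b with 0 ≤ c ≤ 1/√3 and b ≥ 0, the inequality (√(2(1−c)) + b)/(1−c) ≤ √2 + b + ((4.733·b + 2.637)/2)·c holds. -/
/-!
Write the left side as `√2 · (1 - c)^(-1/2) + b · (1 - c)⁻¹` and bound the two convex functions
`(1 - c)^(-1/2)` and `(1 - c)⁻¹` on `[0, 1/√3]` by the lines `1 + 0.9323 c` and `1 + 2.3665 c`,
whose slopes are just large enough for the lines to stay above at the right endpoint.
Then `√2 · 0.9323 ≤ 1.3185 = 2.637 / 2` and `2.3665 = 4.733 / 2`.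
-/

open Real

lemma one_div_sqrt_three_lt : 1 / √3 < 0.5774 := by
  have h : (1.732 : ℝ) < √3 := by rw [Real.lt_sqrt (by norm_num)]; norm_num
  rw [div_lt_iff₀ (by positivity)]
  nlinarith

lemma inv_one_sub_le_one_add_mul {k c : ℝ} (hk : 0 < k) (hc0 : 0 ≤ c) (hc : c ≤ 1 - k⁻¹) :
    (1 - c)⁻¹ ≤ 1 + k * c := by
  have hpos : 0 < 1 - c := by linarith [inv_pos.mpr hk]
  rw [inv_le_iff_one_le_mul₀ hpos]
  have hck : c * k ≤ k - 1 := by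
    have := mul_le_mul_of_nonneg_right hc hk.le
    rwa [sub_mul, inv_mul_cancel₀ hk.ne', one_mul] at this
  nlinarith [mul_le_mul_of_nonneg_left hck hc0]

/-- The constant `0.9323` is chosen so that `(1 + 0.9323 * c) ^ 2 * (1 - c) ≥ 1` still holds at
`c = 1 / √3`, with a margin of about `10⁻⁴`. -/
lemma inv_sqrt_one_sub_le {c : ℝ} (hc0 : 0 ≤ c) (hc : c ≤ 0.5774) :
    (√(1 - c))⁻¹ ≤ 1 + 0.9323 * c := by
  have hpos : 0 < 1 - c := by linarith
  have hpoly : 1 ≤ (1 + 0.9323 * c) ^ 2 * (1 - c) := by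
    have hc' : 0 ≤ 0.5774 - c := by linarith
    nlinarith [mul_nonneg hc0 hc', mul_nonneg (mul_nonneg hc0 hc0) hc']
  rw [← Real.sqrt_inv, Real.sqrt_le_left (by positivity), inv_le_iff_one_le_mul₀ hpos]
  exact hpoly

theorem linear_bound (c b : ℝ) (hc0 : 0 ≤ c) (hc : c ≤ 1 / Real.sqrt 3) (hb : 0 ≤ b) :
    (Real.sqrt (2 * (1 - c)) + b) / (1 - c) ≤
      Real.sqrt 2 + b + ((4.733 * b + 2.637) / 2) * c := by
  have hc' : c ≤ 0.5774 := hc.trans one_div_sqrt_three_lt.le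
  have hsplit : (√(2 * (1 - c)) + b) / (1 - c) = √2 * (√(1 - c))⁻¹ + b * (1 - c)⁻¹ := by
    rw [Real.sqrt_mul zero_le_two, add_div, mul_div_assoc, Real.sqrt_div_self', one_div,
      div_eq_mul_inv]
  have hsqrt2 : √2 * 0.9323 ≤ 1.3185 := by
    have : √2 ≤ 1.41424 := by rw [Real.sqrt_le_left (by norm_num)]; norm_num
    linarith
  calc (√(2 * (1 - c)) + b) / (1 - c)
      ≤ √2 * (1 + 0.9323 * c) + b * (1 + 2.3665 * c) := by
        rw [hsplit]
        gcongr
        · exact inv_sqrt_one_sub_le hc0 hc'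
        -- `1 - 2.3665⁻¹ ≈ 0.57744` lies just above `1 / √3 ≈ 0.57735`
        · exact inv_one_sub_le_one_add_mul (by norm_num) hc0 (by norm_num at hc' ⊢; linarith)
    _ ≤ √2 + b + ((4.733 * b + 2.637) / 2) * c := by nlinarith
end
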